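/- arXiv:math/0311068 — 4 statements merged into one kernel-verified Lean document; each statement's English description precedes it below -/
import Mathlib

section
/- Let e1 = (1,0,0), e2 = (0,1,0), e3 = (0,0,1), e4 = (1,1,-1), e5 = (1,1,0), e6 = (0,1,1) in Z^3. Then e5 = e1 + e2 = e3 + e4 and e6 = e2 + e3. Moreover the three cones Cone(e1,e4,e5), Cone(e1,e3,e5,e6), Cone(e2,e4,e5,e6) have union equal to Cone(e1,e2,e3,e4), and their pairwise intersections are common faces. -/
/-- The convex cone generated by finitely many vectors in `ℝ³`. -/
def coneOf {k : ℕ} (v : Fin k → (Fin 3 → ℝ)) : Set (Fin 3 → ℝ) :=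
  {x | ∃ c : Fin k → ℝ, (∀ i, 0 ≤ c i) ∧ x = ∑ i, c i • v i}

/-- `F` is a face of the cone `σ`. -/
def IsFaceOf (F σ : Set (Fin 3 → ℝ)) : Prop :=
  F ⊆ σ ∧ (∀ x ∈ F, ∀ t : ℝ, 0 ≤ t → t • x ∈ F) ∧
    (∀ x ∈ F, ∀ y ∈ F, x + y ∈ F) ∧
    ∀ x ∈ σ, ∀ y ∈ σ, x + y ∈ F → x ∈ F ∧ y ∈ F

/-- The ray spanned by a vector. -/
def ray (v : Fin 3 → ℝ) : Set (Fin 3 → ℝ) := {x | ∃ t : ℝ, 0 ≤ t ∧ x = t • v}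

/-- An extremal ray of `σ`: a one-dimensional face. -/
def IsExtremalRay (σ R : Set (Fin 3 → ℝ)) : Prop :=
  IsFaceOf R σ ∧ ∃ v, v ≠ 0 ∧ R = ray v

/-- A cone is simplicial if it is generated by linearly independent vectors. -/
def IsSimplicial (σ : Set (Fin 3 → ℝ)) : Prop :=
  ∃ (k : ℕ) (v : Fin k → (Fin 3 → ℝ)), LinearIndependent ℝ v ∧ σ = coneOf v

noncomputable def e1 : Fin 3 → ℝ := ![1,0,0]
noncomputable def e2 : Fin 3 → ℝ := ![0,1,0]
noncomputable def e3 : Fin 3 → ℝ := ![0,0,1]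
noncomputable def e4 : Fin 3 → ℝ := ![1,1,-1]
noncomputable def e5 : Fin 3 → ℝ := ![1,1,0]
noncomputable def e6 : Fin 3 → ℝ := ![0,1,1]

noncomputable def σ₁ : Set (Fin 3 → ℝ) := coneOf ![e1, e4, e5]
noncomputable def σ₂ : Set (Fin 3 → ℝ) := coneOf ![e1, e3, e5, e6]
noncomputable def σ₃ : Set (Fin 3 → ℝ) := coneOf ![e2, e4, e5, e6]

lemma mem_s1 (x : Fin 3 → ℝ) : x ∈ σ₁ ↔ x 1 ≤ x 0 ∧ x 2 ≤ 0 ∧ 0 ≤ x 1 + x 2 := by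
  constructor
  · rintro ⟨c, hc, rfl⟩
    have h0 := hc 0; have h1 := hc 1; have h2 := hc 2
    simp [Fin.sum_univ_three, e1, e4, e5, Matrix.vecHead, Matrix.vecTail]
    refine ⟨by linarith, by linarith, by linarith⟩
  · rintro ⟨h1, h2, h3⟩
    refine ⟨![x 0 - x 1, -(x 2), x 1 + x 2], ?_, ?_⟩
    · intro i; fin_cases i <;> simp <;> linarith
    · funext j; fin_cases j <;>
        simp [Fin.sum_univ_three, e1, e4, e5, Matrix.vecHead, Matrix.vecTail] <;> ring

lemma mem_s2 (x : Fin 3 → ℝ) :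
    x ∈ σ₂ ↔ 0 ≤ x 0 ∧ 0 ≤ x 1 ∧ 0 ≤ x 2 ∧ x 1 ≤ x 0 + x 2 := by
  constructor
  · rintro ⟨c, hc, rfl⟩
    have h0 := hc 0; have h1 := hc 1; have h2 := hc 2; have h3 := hc 3
    simp [Fin.sum_univ_four, e1, e3, e5, e6, Matrix.vecHead, Matrix.vecTail]
    refine ⟨by linarith, by linarith, by linarith, by linarith⟩
  · rintro ⟨h1, h2, h3, h4⟩
    rcases le_total (x 1) (x 0) with h | h
    · refine ⟨![x 0 - x 1, x 2, x 1, 0], ?_, ?_⟩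
      · intro i; fin_cases i <;> simp <;> linarith
      · funext j; fin_cases j <;>
          simp [Fin.sum_univ_four, e1, e3, e5, e6, Matrix.vecHead, Matrix.vecTail] <;> ring
    · refine ⟨![0, x 0 + x 2 - x 1, x 0, x 1 - x 0], ?_, ?_⟩
      · intro i; fin_cases i <;> simp <;> linarith
      · funext j; fin_cases j <;>
          simp [Fin.sum_univ_four, e1, e3, e5, e6, Matrix.vecHead, Matrix.vecTail] <;> ring

lemma mem_s3 (x : Fin 3 → ℝ) :
    x ∈ σ₃ ↔ x 0 ≤ x 1 ∧ 0 ≤ x 0 ∧ 0 ≤ x 0 + x 2 ∧ x 0 + x 2 ≤ x 1 := by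
  constructor
  · rintro ⟨c, hc, rfl⟩
    have h0 := hc 0; have h1 := hc 1; have h2 := hc 2; have h3 := hc 3
    simp [Fin.sum_univ_four, e2, e4, e5, e6, Matrix.vecHead, Matrix.vecTail]
    refine ⟨by linarith, by linarith, by linarith, by linarith⟩
  · rintro ⟨h1, h2, h3, h4⟩
    rcases le_total (x 2) 0 with h | h
    · refine ⟨![x 1 - x 0, -(x 2), x 0 + x 2, 0], ?_, ?_⟩
      · intro i; fin_cases i <;> simp <;> linarith
      · funext j; fin_cases j <;>
          simp [Fin.sum_univ_four, e2, e4, e5, e6, Matrix.vecHead, Matrix.vecTail] <;> ring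
    · refine ⟨![x 1 - x 0 - x 2, 0, x 0, x 2], ?_, ?_⟩
      · intro i; fin_cases i <;> simp <;> linarith
      · funext j; fin_cases j <;>
          simp [Fin.sum_univ_four, e2, e4, e5, e6, Matrix.vecHead, Matrix.vecTail] <;> ring

lemma mem_big (x : Fin 3 → ℝ) :
    x ∈ coneOf ![e1, e2, e3, e4] ↔
      0 ≤ x 0 ∧ 0 ≤ x 1 ∧ 0 ≤ x 0 + x 2 ∧ 0 ≤ x 1 + x 2 := by
  constructor
  · rintro ⟨c, hc, rfl⟩
    have h0 := hc 0; have h1 := hc 1; have h2 := hc 2; have h3 := hc 3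
    simp [Fin.sum_univ_four, e1, e2, e3, e4, Matrix.vecHead, Matrix.vecTail]
    refine ⟨by linarith, by linarith, by linarith, by linarith⟩
  · rintro ⟨h1, h2, h3, h4⟩
    rcases le_total 0 (x 2) with h | h
    · refine ⟨![x 0, x 1, x 2, 0], ?_, ?_⟩
      · intro i; fin_cases i <;> simp <;> linarith
      · funext j; fin_cases j <;>
          simp [Fin.sum_univ_four, e1, e2, e3, e4, Matrix.vecHead, Matrix.vecTail] <;> ring
    · refine ⟨![x 0 + x 2, x 1 + x 2, 0, -(x 2)], ?_, ?_⟩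
      · intro i; fin_cases i <;> simp <;> linarith
      · funext j; fin_cases j <;>
          simp [Fin.sum_univ_four, e1, e2, e3, e4, Matrix.vecHead, Matrix.vecTail] <;> ring

lemma union_eq : σ₁ ∪ σ₂ ∪ σ₃ = coneOf ![e1, e2, e3, e4] := by
  ext x
  simp only [Set.mem_union, mem_s1, mem_s2, mem_s3, mem_big]
  constructor
  · rintro ((⟨h1, h2, h3⟩ | ⟨h1, h2, h3, h4⟩) | ⟨h1, h2, h3, h4⟩) <;>
      refine ⟨by linarith, by linarith, by linarith, by linarith⟩
  · rintro ⟨h1, h2, h3, h4⟩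
    rcases le_total (x 2) 0 with h | h
    · rcases le_total (x 1) (x 0) with h' | h'
      · exact Or.inl (Or.inl ⟨h', h, h4⟩)
      · exact Or.inr ⟨h', h1, h3, by linarith⟩
    · rcases le_total (x 1) (x 0 + x 2) with h' | h'
      · exact Or.inl (Or.inr ⟨h1, h2, h, h'⟩)
      · exact Or.inr ⟨by linarith, h1, h3, h'⟩

lemma face12a : IsFaceOf (σ₁ ∩ σ₂) σ₁ := by
  refine ⟨Set.inter_subset_left, ?_, ?_, ?_⟩
  · intro x hx t ht
    rw [Set.mem_inter_iff, mem_s1, mem_s2] at hx ⊢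
    simp only [Pi.smul_apply, smul_eq_mul]
    obtain ⟨⟨a1, a2, a3⟩, b1, b2, b3, b4⟩ := hx
    refine ⟨⟨?_, ?_, ?_⟩, ?_, ?_, ?_, ?_⟩ <;> nlinarith
  · intro x hx y hy
    rw [Set.mem_inter_iff, mem_s1, mem_s2] at hx hy ⊢
    simp only [Pi.add_apply]
    obtain ⟨⟨a1, a2, a3⟩, b1, b2, b3, b4⟩ := hx
    obtain ⟨⟨c1, c2, c3⟩, d1, d2, d3, d4⟩ := hy
    refine ⟨⟨?_, ?_, ?_⟩, ?_, ?_, ?_, ?_⟩ <;> linarith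
  · intro x hx y hy hxy
    rw [mem_s1] at hx hy
    rw [Set.mem_inter_iff, mem_s1, mem_s2] at hxy
    simp only [Pi.add_apply] at hxy
    obtain ⟨⟨a1, a2, a3⟩, b1, b2, b3, b4⟩ := hxy
    obtain ⟨p1, p2, p3⟩ := hx; obtain ⟨q1, q2, q3⟩ := hy
    rw [Set.mem_inter_iff, Set.mem_inter_iff, mem_s1, mem_s1, mem_s2, mem_s2]
    refine ⟨⟨⟨?_, ?_, ?_⟩, ?_, ?_, ?_, ?_⟩, ⟨?_, ?_, ?_⟩, ?_, ?_, ?_, ?_⟩ <;> linarith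

lemma face12b : IsFaceOf (σ₁ ∩ σ₂) σ₂ := by
  obtain ⟨-, h2, h3, -⟩ := face12a
  refine ⟨Set.inter_subset_right, h2, h3, ?_⟩
  · intro x hx y hy hxy
    rw [mem_s2] at hx hy
    rw [Set.mem_inter_iff, mem_s1, mem_s2] at hxy
    simp only [Pi.add_apply] at hxy
    obtain ⟨⟨a1, a2, a3⟩, b1, b2, b3, b4⟩ := hxy
    obtain ⟨p1, p2, p3, p4⟩ := hx; obtain ⟨q1, q2, q3, q4⟩ := hy
    rw [Set.mem_inter_iff, Set.mem_inter_iff, mem_s1, mem_s1, mem_s2, mem_s2]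
    refine ⟨⟨⟨?_, ?_, ?_⟩, ?_, ?_, ?_, ?_⟩, ⟨?_, ?_, ?_⟩, ?_, ?_, ?_, ?_⟩ <;> linarith

lemma face13a : IsFaceOf (σ₁ ∩ σ₃) σ₁ := by
  refine ⟨Set.inter_subset_left, ?_, ?_, ?_⟩
  · intro x hx t ht
    rw [Set.mem_inter_iff, mem_s1, mem_s3] at hx ⊢
    simp only [Pi.smul_apply, smul_eq_mul]
    obtain ⟨⟨a1, a2, a3⟩, b1, b2, b3, b4⟩ := hx
    refine ⟨⟨?_, ?_, ?_⟩, ?_, ?_, ?_, ?_⟩ <;> nlinarith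
  · intro x hx y hy
    rw [Set.mem_inter_iff, mem_s1, mem_s3] at hx hy ⊢
    simp only [Pi.add_apply]
    obtain ⟨⟨a1, a2, a3⟩, b1, b2, b3, b4⟩ := hx
    obtain ⟨⟨c1, c2, c3⟩, d1, d2, d3, d4⟩ := hy
    refine ⟨⟨?_, ?_, ?_⟩, ?_, ?_, ?_, ?_⟩ <;> linarith
  · intro x hx y hy hxy
    rw [mem_s1] at hx hy
    rw [Set.mem_inter_iff, mem_s1, mem_s3] at hxy
    simp only [Pi.add_apply] at hxy
    obtain ⟨⟨a1, a2, a3⟩, b1, b2, b3, b4⟩ := hxy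
    obtain ⟨p1, p2, p3⟩ := hx; obtain ⟨q1, q2, q3⟩ := hy
    rw [Set.mem_inter_iff, Set.mem_inter_iff, mem_s1, mem_s1, mem_s3, mem_s3]
    refine ⟨⟨⟨?_, ?_, ?_⟩, ?_, ?_, ?_, ?_⟩, ⟨?_, ?_, ?_⟩, ?_, ?_, ?_, ?_⟩ <;> linarith

lemma face13b : IsFaceOf (σ₁ ∩ σ₃) σ₃ := by
  obtain ⟨-, h2, h3, -⟩ := face13a
  refine ⟨Set.inter_subset_right, h2, h3, ?_⟩
  · intro x hx y hy hxy
    rw [mem_s3] at hx hy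
    rw [Set.mem_inter_iff, mem_s1, mem_s3] at hxy
    simp only [Pi.add_apply] at hxy
    obtain ⟨⟨a1, a2, a3⟩, b1, b2, b3, b4⟩ := hxy
    obtain ⟨p1, p2, p3, p4⟩ := hx; obtain ⟨q1, q2, q3, q4⟩ := hy
    rw [Set.mem_inter_iff, Set.mem_inter_iff, mem_s1, mem_s1, mem_s3, mem_s3]
    refine ⟨⟨⟨?_, ?_, ?_⟩, ?_, ?_, ?_, ?_⟩, ⟨?_, ?_, ?_⟩, ?_, ?_, ?_, ?_⟩ <;> linarith

lemma face23a : IsFaceOf (σ₂ ∩ σ₃) σ₂ := by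
  refine ⟨Set.inter_subset_left, ?_, ?_, ?_⟩
  · intro x hx t ht
    rw [Set.mem_inter_iff, mem_s2, mem_s3] at hx ⊢
    simp only [Pi.smul_apply, smul_eq_mul]
    obtain ⟨⟨a1, a2, a3, a4⟩, b1, b2, b3, b4⟩ := hx
    refine ⟨⟨?_, ?_, ?_, ?_⟩, ?_, ?_, ?_, ?_⟩ <;> nlinarith
  · intro x hx y hy
    rw [Set.mem_inter_iff, mem_s2, mem_s3] at hx hy ⊢
    simp only [Pi.add_apply]
    obtain ⟨⟨a1, a2, a3, a4⟩, b1, b2, b3, b4⟩ := hx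
    obtain ⟨⟨c1, c2, c3, c4⟩, d1, d2, d3, d4⟩ := hy
    refine ⟨⟨?_, ?_, ?_, ?_⟩, ?_, ?_, ?_, ?_⟩ <;> linarith
  · intro x hx y hy hxy
    rw [mem_s2] at hx hy
    rw [Set.mem_inter_iff, mem_s2, mem_s3] at hxy
    simp only [Pi.add_apply] at hxy
    obtain ⟨⟨a1, a2, a3, a4⟩, b1, b2, b3, b4⟩ := hxy
    obtain ⟨p1, p2, p3, p4⟩ := hx; obtain ⟨q1, q2, q3, q4⟩ := hy
    rw [Set.mem_inter_iff, Set.mem_inter_iff, mem_s2, mem_s2, mem_s3, mem_s3]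
    refine ⟨⟨⟨?_, ?_, ?_, ?_⟩, ?_, ?_, ?_, ?_⟩, ⟨?_, ?_, ?_, ?_⟩, ?_, ?_, ?_, ?_⟩ <;> linarith

lemma face23b : IsFaceOf (σ₂ ∩ σ₃) σ₃ := by
  obtain ⟨-, h2, h3, -⟩ := face23a
  refine ⟨Set.inter_subset_right, h2, h3, ?_⟩
  · intro x hx y hy hxy
    rw [mem_s3] at hx hy
    rw [Set.mem_inter_iff, mem_s2, mem_s3] at hxy
    simp only [Pi.add_apply] at hxy
    obtain ⟨⟨a1, a2, a3, a4⟩, b1, b2, b3, b4⟩ := hxy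
    obtain ⟨p1, p2, p3, p4⟩ := hx; obtain ⟨q1, q2, q3, q4⟩ := hy
    rw [Set.mem_inter_iff, Set.mem_inter_iff, mem_s2, mem_s2, mem_s3, mem_s3]
    refine ⟨⟨⟨?_, ?_, ?_, ?_⟩, ?_, ?_, ?_, ?_⟩, ⟨?_, ?_, ?_, ?_⟩, ?_, ?_, ?_, ?_⟩ <;> linarith


/-- `e5 = e1 + e2 = e3 + e4`, `e6 = e2 + e3`; the three cones
cover `Cone(e1,e2,e3,e4)` and pairwise intersect in common faces. -/
theorem stmt1 :
    e5 = e1 + e2 ∧ e5 = e3 + e4 ∧ e6 = e2 + e3 ∧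
    σ₁ ∪ σ₂ ∪ σ₃ = coneOf ![e1, e2, e3, e4] ∧
    (IsFaceOf (σ₁ ∩ σ₂) σ₁ ∧ IsFaceOf (σ₁ ∩ σ₂) σ₂) ∧
    (IsFaceOf (σ₁ ∩ σ₃) σ₁ ∧ IsFaceOf (σ₁ ∩ σ₃) σ₃) ∧
    (IsFaceOf (σ₂ ∩ σ₃) σ₂ ∧ IsFaceOf (σ₂ ∩ σ₃) σ₃) := by
  exact ⟨by funext i; fin_cases i <;> simp [e1, e2, e5, Matrix.vecHead, Matrix.vecTail],
    by funext i; fin_cases i <;> simp [e3, e4, e5, Matrix.vecHead, Matrix.vecTail],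
    by funext i; fin_cases i <;> simp [e2, e3, e6, Matrix.vecHead, Matrix.vecTail],
    union_eq, ⟨face12a, face12b⟩, ⟨face13a, face13b⟩, ⟨face23a, face23b⟩⟩
end

section
/- Let v1 = (0,0,1), v2 = (-1,0,0), v3 = (1,0,-1), v4 = (0,-1,0), v5 = (0,2,-1) in Z^3. Then the six 3-dimensional cones Cone(v1,v2,v4), Cone(v1,v2,v5), Cone(v1,v3,v4), Cone(v1,v3,v5), Cone(v2,v3,v4), Cone(v2,v3,v5) together with their faces form a complete fan, i.e. their union is all of R^3. -/
noncomputable def v1 : Fin 3 → ℝ := ![0,0,1]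
noncomputable def v2 : Fin 3 → ℝ := ![-1,0,0]
noncomputable def v3 : Fin 3 → ℝ := ![1,0,-1]
noncomputable def v4 : Fin 3 → ℝ := ![0,-1,0]
noncomputable def v5 : Fin 3 → ℝ := ![0,2,-1]


lemma mem_cone3 (u w m x : Fin 3 → ℝ) (p q r : ℝ) (hp : 0 ≤ p) (hq : 0 ≤ q)
    (hr : 0 ≤ r) (hx : x = p • u + q • w + r • m) : x ∈ coneOf ![u, w, m] := by
  refine ⟨![p, q, r], ?_, ?_⟩
  · intro i; fin_cases i <;> simpa
  · simpa [Fin.sum_univ_three] using hx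

/-- the six maximal cones of the fan cover all of `ℝ³`
(the fan is complete). -/
theorem stmt8 :
    coneOf ![v1, v2, v4] ∪ coneOf ![v1, v2, v5] ∪ coneOf ![v1, v3, v4] ∪
      coneOf ![v1, v3, v5] ∪ coneOf ![v2, v3, v4] ∪ coneOf ![v2, v3, v5] =
      Set.univ := by
  ext x
  simp only [Set.mem_union, Set.mem_univ, iff_true]
  set a := x 0 with ha
  set b := x 1 with hb
  set c := x 2 with hc
  rcases le_total b 0 with hb0 | hb0
  · rcases le_total 0 (a + c) with hac | hac
    · rcases le_total a 0 with ha0 | ha0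
      · -- cone(v1,v2,v4)
        refine Or.inl (Or.inl (Or.inl (Or.inl (Or.inl
          (mem_cone3 v1 v2 v4 x c (-a) (-b) (by linarith) (by linarith) (by linarith) ?_)))))
        funext i; fin_cases i <;> simp [v1, v2, v4, ha, hb, hc] <;> ring
      · -- cone(v1,v3,v4)
        refine Or.inl (Or.inl (Or.inl (Or.inr
          (mem_cone3 v1 v3 v4 x (a + c) a (-b) (by linarith) (by linarith) (by linarith) ?_))))
        funext i; fin_cases i <;> simp [v1, v3, v4, ha, hb, hc] <;> ring
    · rcases le_total c 0 with hc0 | hc0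
      · -- cone(v2,v3,v4)
        refine Or.inl (Or.inr
          (mem_cone3 v2 v3 v4 x (-c - a) (-c) (-b) (by linarith) (by linarith) (by linarith) ?_))
        funext i; fin_cases i <;> simp [v2, v3, v4, ha, hb, hc] <;> ring
      · -- a ≤ -c < 0 : cone(v1,v2,v4)
        refine Or.inl (Or.inl (Or.inl (Or.inl (Or.inl
          (mem_cone3 v1 v2 v4 x c (-a) (-b) (by linarith) (by linarith) (by linarith) ?_)))))
        funext i; fin_cases i <;> simp [v1, v2, v4, ha, hb, hc] <;> ring
  · rcases le_total 0 (a + c + b / 2) with hac | hac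
    · rcases le_total a 0 with ha0 | ha0
      · -- cone(v1,v2,v5)
        refine Or.inl (Or.inl (Or.inl (Or.inl (Or.inr
          (mem_cone3 v1 v2 v5 x (c + b / 2) (-a) (b / 2) (by linarith) (by linarith)
            (by linarith) ?_)))))
        funext i; fin_cases i <;> simp [v1, v2, v5, ha, hb, hc] <;> ring
      · -- cone(v1,v3,v5)
        refine Or.inl (Or.inl (Or.inr
          (mem_cone3 v1 v3 v5 x (a + c + b / 2) a (b / 2) (by linarith) (by linarith)
            (by linarith) ?_)))
        funext i; fin_cases i <;> simp [v1, v3, v5, ha, hb, hc] <;> ring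
    · rcases le_total (c + b / 2) 0 with hc0 | hc0
      · -- cone(v2,v3,v5)
        refine Or.inr
          (mem_cone3 v2 v3 v5 x (-c - b / 2 - a) (-c - b / 2) (b / 2) (by linarith)
            (by linarith) (by linarith) ?_)
        funext i; fin_cases i <;> simp [v2, v3, v5, ha, hb, hc] <;> ring
      · -- cone(v1,v2,v5)
        refine Or.inl (Or.inl (Or.inl (Or.inl (Or.inr
          (mem_cone3 v1 v2 v5 x (c + b / 2) (-a) (b / 2) (by linarith) (by linarith)
            (by linarith) ?_)))))
        funext i; fin_cases i <;> simp [v1, v2, v5, ha, hb, hc] <;> ring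
end

section
/- Negativity lemma (toy divisorial version over a point, surfaces): Let Z be a smooth projective surface, and let E = Σ a_i E_i be a Q-divisor supported on curves contracted by a birational morphism μ : Z → U to a normal surface. If -E is μ-nef, i.e. (-E)·E_i ≥ 0 for every μ-exceptional curve E_i, then E is effective or zero: a_i ≥ 0 for all i. -/
open Matrix

/-- negativity lemma, toy divisorial version for surfaces,
reduced to the intersection matrix, which is negative definite by Mumford's
theorem: let `M` be the (symmetric, negative definite, integral) intersection
matrix of the `μ`-exceptional curves `E_1, …, E_r`, so `M i j = E_i · E_j ≥ 0`
for `i ≠ j`.  Let `E = Σ a_i E_i` be a `ℚ`-divisor supported on the exceptional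
curves with `-E` `μ`-nef, i.e. `E · E_i = Σ_j a_j M j i ≤ 0` for all `i`.
Then `E` is effective: `a_i ≥ 0` for all `i`. -/
theorem stmt13 (r : ℕ) (M : Matrix (Fin r) (Fin r) ℤ)
    (hsymm : M.IsSymm)
    (hnegdef : ∀ x : Fin r → ℝ, x ≠ 0 → x ⬝ᵥ ((M.map (Int.cast : ℤ → ℝ)) *ᵥ x) < 0)
    (hoffdiag : ∀ i j, i ≠ j → 0 ≤ M i j)
    (a : Fin r → ℚ)
    (hnef : ∀ i : Fin r, (∑ j, a j * (M j i : ℚ)) ≤ 0) :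
    ∀ i, 0 ≤ a i := by
  set Mr : Matrix (Fin r) (Fin r) ℝ := M.map (Int.cast : ℤ → ℝ) with hMr
  set A : Fin r → ℝ := fun i => (a i : ℝ) with hA
  set x : Fin r → ℝ := fun i => min (A i) 0 with hx
  set p : Fin r → ℝ := fun i => max (A i) 0 with hp
  have hxle : ∀ i, x i ≤ 0 := fun i => min_le_right _ _
  have hple : ∀ i, 0 ≤ p i := fun i => le_max_right _ _
  have hsum : ∀ i, p i + x i = A i := fun i => by
    simp [hx, hp, max_add_min]
  have hMsymm : ∀ i j, Mr i j = Mr j i := by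
    intro i j
    simp only [hMr, Matrix.map_apply]
    have h := congrFun (congrFun hsymm j) i
    simp only [Matrix.transpose_apply] at h
    exact_mod_cast h
  -- nef condition over ℝ : (Mr *ᵥ A) i ≤ 0
  have hnefR : ∀ i, (Mr *ᵥ A) i ≤ 0 := by
    intro i
    have := hnef i
    have hcast : ((∑ j, a j * (M j i : ℚ) : ℚ) : ℝ) ≤ 0 := by exact_mod_cast this
    calc (Mr *ᵥ A) i = ∑ j, Mr i j * A j := by
          simp [Matrix.mulVec, dotProduct]
      _ = ((∑ j, a j * (M j i : ℚ) : ℚ) : ℝ) := by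
          push_cast
          refine Finset.sum_congr rfl (fun j _ => ?_)
          rw [hMsymm i j]
          simp [hMr, hA, Matrix.map_apply, mul_comm]
      _ ≤ 0 := hcast
  -- x ⬝ᵥ Mr *ᵥ A ≥ 0
  have h1 : 0 ≤ x ⬝ᵥ (Mr *ᵥ A) := by
    apply Finset.sum_nonneg
    intro i _
    nlinarith [hxle i, hnefR i]
  -- x ⬝ᵥ Mr *ᵥ p ≤ 0
  have h2 : x ⬝ᵥ (Mr *ᵥ p) ≤ 0 := by
    have : x ⬝ᵥ (Mr *ᵥ p) = ∑ i, ∑ j, x i * (Mr i j * p j) := by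
      simp [Matrix.mulVec, dotProduct, Finset.mul_sum]
    rw [this]
    apply Finset.sum_nonpos
    intro i _
    apply Finset.sum_nonpos
    intro j _
    rcases eq_or_lt_of_le (hxle i) with hxi | hxi
    · simp [hxi]
    · -- x i < 0, so A i < 0, so p i = 0
      have hAi : A i < 0 := by
        by_contra h
        push_neg at h
        simp [hx, min_eq_right h] at hxi
      by_cases hij : j = i
      · subst hij
        have : p j = 0 := max_eq_right hAi.le
        simp [this]
      · have hM : (0 : ℝ) ≤ Mr i j := by
          simp only [hMr, Matrix.map_apply]
          exact_mod_cast hoffdiag i j (Ne.symm hij)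
        exact mul_nonpos_of_nonpos_of_nonneg hxi.le (mul_nonneg hM (hple j))
  -- combine: x ⬝ᵥ Mr *ᵥ x ≥ 0
  have hAx : Mr *ᵥ A = Mr *ᵥ p + Mr *ᵥ x := by
    have hpA : p + x = A := funext hsum
    rw [← hpA, Matrix.mulVec_add]
  have h3 : 0 ≤ x ⬝ᵥ (Mr *ᵥ x) := by
    have := h1
    rw [hAx, dotProduct_add] at this
    linarith
  -- conclude x = 0
  have hx0 : x = 0 := by
    by_contra h
    exact absurd (hnegdef x h) (not_lt.mpr h3)
  intro i
  have : x i = 0 := congrFun hx0 i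
  have hAi : 0 ≤ A i := by
    by_contra h
    push_neg at h
    rw [hx] at this
    simp [min_eq_left h.le] at this
    linarith
  simp only [hA] at hAi
  exact_mod_cast hAi
end

section
/- Linear-algebra core of the negativity lemma: Let M be a symmetric negative definite real r×r matrix with M_{ij} ≥ 0 for all i ≠ j. If v ∈ R^r satisfies (Mv)_i ≥ 0 for all i, then v_i ≤ 0 for all i. -/
open Matrix

/-- linear-algebra core of the negativity lemma: if `M` is a
symmetric negative definite real `r × r` matrix with `M i j ≥ 0` for `i ≠ j`,
and `(M v)_i ≥ 0` for all `i`, then `v_i ≤ 0` for all `i`. -/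
theorem stmt14 (r : ℕ) (M : Matrix (Fin r) (Fin r) ℝ)
    (hsymm : M.IsSymm)
    (hnegdef : ∀ x : Fin r → ℝ, x ≠ 0 → x ⬝ᵥ (M *ᵥ x) < 0)
    (hoffdiag : ∀ i j, i ≠ j → 0 ≤ M i j)
    (v : Fin r → ℝ) (hv : ∀ i, 0 ≤ (M *ᵥ v) i) :
    ∀ i, v i ≤ 0 := by
  set p : Fin r → ℝ := fun i => max (v i) 0 with hp
  set n : Fin r → ℝ := fun i => max (-(v i)) 0 with hn
  have hpn : p = v + n := by
    funext i
    simp only [hp, hn, Pi.add_apply]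
    rcases le_total (v i) 0 with h | h
    · rw [max_eq_right h, max_eq_left (by linarith)]; ring
    · rw [max_eq_left h, max_eq_right (by linarith)]; ring
  have hp0 : ∀ i, 0 ≤ p i := fun i => le_max_right _ _
  have hn0 : ∀ i, 0 ≤ n i := fun i => le_max_right _ _
  have hpnz : ∀ i, p i * n i = 0 := by
    intro i
    simp only [hp, hn]
    rcases le_total (v i) 0 with h | h
    · rw [max_eq_right h]; ring
    · rw [max_eq_right (by linarith : -(v i) ≤ 0)]; ring
  have key : 0 ≤ p ⬝ᵥ (M *ᵥ p) := by
    have hMp : M *ᵥ p = M *ᵥ v + M *ᵥ n := by rw [hpn, Matrix.mulVec_add]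
    rw [hMp, dotProduct_add]
    have h1 : 0 ≤ p ⬝ᵥ (M *ᵥ v) := by
      apply Finset.sum_nonneg
      intro i _
      exact mul_nonneg (hp0 i) (hv i)
    have h2 : 0 ≤ p ⬝ᵥ (M *ᵥ n) := by
      unfold dotProduct Matrix.mulVec dotProduct
      apply Finset.sum_nonneg
      intro i _
      rw [Finset.mul_sum]
      apply Finset.sum_nonneg
      intro j _
      rcases eq_or_ne i j with rfl | hij
      · show 0 ≤ p i * (M i i * n i)
        have h : p i * (M i i * n i) = M i i * (p i * n i) := by ring
        rw [h, hpnz i, mul_zero]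
      · exact mul_nonneg (hp0 i) (mul_nonneg (hoffdiag i j hij) (hn0 j))
    linarith
  have hpz : p = 0 := by
    by_contra h
    exact absurd key (not_le.mpr (hnegdef p h))
  intro i
  have h1 := congrFun hpz i
  simp only [hp, Pi.zero_apply] at h1
  have h2 := le_max_left (v i) 0
  linarith
end
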